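/- Let s > 0 and a ∈ (0,1), and let (y_t, u_t, v_t)_{t≥0} be the unique solution of the system y' = s y(1−y)/(y+(1+s)(1−y)), u' = u/2 + (u+v)y/2 − u/(y+(1+s)(1−y)), v' = v/2 + (u+v)(1−y)/2 − (1+s)v/(y+(1+s)(1−y)) with initial condition (a, a, 0). Then for all t ≥ 0, u_t/y_t − v_t/(1−y_t) = e^{−t/2}. -/

import Mathlib

open MeasureTheory Filter

/-- The drift function `g` of the dynamical system
`y' = s y(1−y)/(y+(1+s)(1−y))`,
`u' = u/2 + (u+v)y/2 − u/(y+(1+s)(1−y))`,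
`v' = v/2 + (u+v)(1−y)/2 − (1+s)v/(y+(1+s)(1−y))`. -/
noncomputable def gdrift (s : ℝ) (p : ℝ × ℝ × ℝ) : ℝ × ℝ × ℝ :=
  (s * p.1 * (1 - p.1) / (p.1 + (1 + s) * (1 - p.1)),
   p.2.1 / 2 + (p.2.1 + p.2.2) * p.1 / 2 - p.2.1 / (p.1 + (1 + s) * (1 - p.1)),
   p.2.2 / 2 + (p.2.1 + p.2.2) * (1 - p.1) / 2 -
     (1 + s) * p.2.2 / (p.1 + (1 + s) * (1 - p.1)))

/-- A solution of the dynamical system on `[0,∞)` with values in `[0,1]³` and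
initial condition `(a, a, 0)`. -/
def IsSolSys (s a : ℝ) (z : ℝ → ℝ × ℝ × ℝ) : Prop :=
  z 0 = (a, a, 0) ∧ ∀ t ∈ Set.Ici (0 : ℝ),
    z t ∈ Set.Icc (0 : ℝ) 1 ×ˢ Set.Icc (0 : ℝ) 1 ×ˢ Set.Icc (0 : ℝ) 1 ∧
    HasDerivWithinAt z (gdrift s (z t)) (Set.Ici 0) t

/-!
Writing `D = y + (1+s)(1-y) = 1 + s(1-y)`, the drift gives
`(u/y)' = (u/y)/2 + (u+v)/2 - u(1 + s(1-y))/(yD)` and the analogous formula for `v/(1-y)`;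
the factor `1 + s(1-y)` cancels `D`, so `q = u/y - v/(1-y)` satisfies `q' = q/2 - q = -q/2`.
Hence `q_t = q_0 e^{-t/2}`, and `q_0 = a/a - 0 = 1`.
-/

open Set Real

noncomputable def ratioDiff (p : ℝ × ℝ × ℝ) : ℝ :=
  p.2.1 / p.1 - p.2.2 / (1 - p.1)

theorem eq_mul_exp_of_hasDerivWithinAt_Ici {f : ℝ → ℝ} {c : ℝ}
    (hf : ∀ t ∈ Ici (0 : ℝ), HasDerivWithinAt f (c * f t) (Ici 0) t) :
    ∀ t ∈ Ici (0 : ℝ), f t = f 0 * exp (c * t) := by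
  set g : ℝ → ℝ := fun t => f t * exp (-(c * t))
  have hg : ∀ t ∈ Ici (0 : ℝ), HasDerivWithinAt g 0 (Ici 0) t := by
    intro t ht
    have hexp : HasDerivAt (fun t => exp (-(c * t))) (exp (-(c * t)) * -c) t := by
      simpa using ((hasDerivAt_id t).const_mul c).neg.exp
    exact ((hf t ht).mul hexp.hasDerivWithinAt).congr_deriv (by ring)
  intro t ht
  have hconst : g t = g 0 := by
    rcases (mem_Ici.mp ht).eq_or_lt with rfl | hpos
    · rfl
    exact constant_of_has_deriv_right_zero
      (fun x hx => (hg x hx.1).continuousWithinAt.mono Icc_subset_Ici_self)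
      (fun x hx => (hg x hx.1).mono (Ici_subset_Ici.mpr hx.1)) t (right_mem_Icc.mpr hpos.le)
  simp only [g, mul_zero, neg_zero, exp_zero, mul_one] at hconst
  rw [← hconst, mul_assoc, ← exp_add, neg_add_cancel, exp_zero, mul_one]

theorem ratioDiff_deriv_gdrift {s y u v : ℝ} (hy₀ : y ≠ 0) (hy₁ : 1 - y ≠ 0)
    (hD : y + (1 + s) * (1 - y) ≠ 0) :
    let g := gdrift s (y, u, v)
    (g.2.1 * y - u * g.1) / y ^ 2 - (g.2.2 * (1 - y) - v * (0 - g.1)) / (1 - y) ^ 2 =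
      -(1 / 2) * ratioDiff (y, u, v) := by
  simp only [gdrift, ratioDiff]
  field_simp
  ring

theorem HasDerivWithinAt.ratioDiff_of_gdrift {s : ℝ} (hs : -1 < s) {z : ℝ → ℝ × ℝ × ℝ}
    {S : Set ℝ} {t : ℝ} (hz : HasDerivWithinAt z (gdrift s (z t)) S t)
    (hy : (z t).1 ∈ Ioo 0 1) :
    HasDerivWithinAt (fun t => ratioDiff (z t)) (-(1 / 2) * ratioDiff (z t)) S t := by
  obtain ⟨hy₀, hy₁⟩ := hy
  have hD : (z t).1 + (1 + s) * (1 - (z t).1) ≠ 0 := by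
    have : 0 < (1 + s) * (1 - (z t).1) := mul_pos (by linarith) (by linarith)
    linarith
  have hy' : HasDerivWithinAt (fun t => (z t).1) (gdrift s (z t)).1 S t := hz.fst
  have hu' : HasDerivWithinAt (fun t => (z t).2.1) (gdrift s (z t)).2.1 S t := hz.snd.fst
  have hv' : HasDerivWithinAt (fun t => (z t).2.2) (gdrift s (z t)).2.2 S t := hz.snd.snd
  rw [← ratioDiff_deriv_gdrift hy₀.ne' (by linarith) hD]
  exact (hu'.div hy' hy₀.ne').sub
    (hv'.div ((hasDerivWithinAt_const t S 1).sub hy') (by linarith))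

theorem dynamical_system_conserved_quantity
    (s a : ℝ) (hs : 0 < s)
    (z : ℝ → ℝ × ℝ × ℝ) (hz : IsSolSys s a z)
    (hy : ∀ t ∈ Set.Ici (0 : ℝ), (z t).1 ∈ Set.Ioo (0 : ℝ) 1) :
    ∀ t ∈ Set.Ici (0 : ℝ),
      (z t).2.1 / (z t).1 - (z t).2.2 / (1 - (z t).1) = Real.exp (-t / 2) := by
  obtain ⟨hz₀, hzd⟩ := hz
  have hq := eq_mul_exp_of_hasDerivWithinAt_Ici fun t ht =>
    (hzd t ht).2.ratioDiff_of_gdrift (by linarith) (hy t ht)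
  have ha : a ≠ 0 := by simpa [hz₀] using (hy 0 self_mem_Ici).1.ne'
  intro t ht
  have hq₀ : ratioDiff (z 0) = 1 := by simp [ratioDiff, hz₀, ha]
  rw [← ratioDiff, hq t ht, hq₀, one_mul]
  ring_nf
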